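/- Let A_1, …, A_n ∈ ℝ^d with n ≥ 1, and let σ(t) = 1/(1 + e^{−t}), w(t) = σ(t)(1 − σ(t)). For β ∈ ℝ^d define the logistic Hessian matrix H_β = (1/n) ∑_{i=1}^n w(⟨A_i, β⟩) A_i A_iᵀ. Then for all β, β′ ∈ ℝ^d, ‖H_β − H_{β′}‖ ≤ ( max_{1≤i≤n} ‖A_i‖₂³ / (6√3) ) · ‖β − β′‖₂, where ‖·‖ on matrices is the operator norm induced by the Euclidean norm. (Lemma 5.3, Lipschitz continuity of the logistic Hessian.) -/

import Mathlib

open Matrix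

/-- Operator norm of a square real matrix induced by the Euclidean norm. -/
noncomputable def matOpNorm {d : ℕ} (A : Matrix (Fin d) (Fin d) ℝ) : ℝ :=
  ‖Matrix.toEuclideanCLM (𝕜 := ℝ) A‖

/-- Euclidean norm of a vector in ℝ^d. -/
noncomputable def vnorm {d : ℕ} (v : Fin d → ℝ) : ℝ :=
  Real.sqrt (∑ i, (v i) ^ 2)

/-- Frobenius norm of a square real matrix. -/
noncomputable def frobNorm {d : ℕ} (A : Matrix (Fin d) (Fin d) ℝ) : ℝ :=
  Real.sqrt (∑ i, ∑ j, (A i j) ^ 2)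

/-- The positive semidefinite square root of a positive semidefinite matrix
(Mathlib's former `Matrix.PosSemidef.sqrt`, spelled out with its old definition). -/
noncomputable def posSemidefSqrt {d : ℕ} {M : Matrix (Fin d) (Fin d) ℝ} (hA : M.PosSemidef) :
    Matrix (Fin d) (Fin d) ℝ :=
  hA.1.eigenvectorUnitary.1 * diagonal ((↑) ∘ (√·) ∘ hA.1.eigenvalues) *
  (star hA.1.eigenvectorUnitary : Matrix (Fin d) (Fin d) ℝ)

/-- Inverse of the (unique symmetric positive definite) square root of a
positive definite matrix: `M^{-1/2}`. -/
noncomputable def pdInvSqrt {d : ℕ} {M : Matrix (Fin d) (Fin d) ℝ} (hM : M.PosDef) :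
    Matrix (Fin d) (Fin d) ℝ :=
  (posSemidefSqrt hM.posSemidef)⁻¹

/-- Smallest eigenvalue of a real symmetric matrix, via the Rayleigh quotient
(infimum of `vᵀ A v` over Euclidean-unit vectors `v`). -/
noncomputable def lamMin {d : ℕ} (A : Matrix (Fin d) (Fin d) ℝ) : ℝ :=
  ⨅ v : {v : Fin d → ℝ // ∑ i, (v i) ^ 2 = 1}, dotProduct v.1 (A *ᵥ v.1)

/-- Largest eigenvalue of a real symmetric matrix, via the Rayleigh quotient
(supremum of `vᵀ A v` over Euclidean-unit vectors `v`). -/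
noncomputable def lamMax {d : ℕ} (A : Matrix (Fin d) (Fin d) ℝ) : ℝ :=
  ⨆ v : {v : Fin d → ℝ // ∑ i, (v i) ^ 2 = 1}, dotProduct v.1 (A *ᵥ v.1)

/-- Loewner order on real symmetric matrices: `A ⪯ B` iff `B - A` is positive
semidefinite. -/
def loewnerLE {d : ℕ} (A B : Matrix (Fin d) (Fin d) ℝ) : Prop :=
  (B - A).PosSemidef

/-!
Since `σ' = σ(1 - σ)`, the weight `w = σ(1 - σ)` has derivative `w(1 - 2σ)`, and on `[0, 1]` the
cubic `s(1 - s)(1 - 2s)` is bounded in absolute value by `1/(6√3)` (attained at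
`1 - 2s = 1/√3`). Hence `w` is `1/(6√3)`-Lipschitz, and by Cauchy–Schwarz the `i`-th summand of
`H_β - H_β'` has operator norm at most `‖A_i‖₂ ‖β - β'‖₂ / (6√3) · ‖A_i A_iᵀ‖ =
‖A_i‖₂³ ‖β - β'‖₂ / (6√3)`; averaging over `i` gives the bound.
-/

open Real
open scoped Matrix.Norms.L2Operator

lemma abs_mul_one_sub_mul_one_sub_two_mul_le {s : ℝ} (h0 : 0 ≤ s) (h1 : s ≤ 1) :
    |s * (1 - s) * (1 - 2 * s)| ≤ 1 / (6 * √3) := by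
  refine abs_le_of_sq_le_sq ?_ (by positivity)
  have hsq : (1 / (6 * √3)) ^ 2 = 1 / 108 := by
    rw [div_pow, mul_pow, sq_sqrt (by norm_num : (0:ℝ) ≤ 3)]; norm_num
  have hq : 0 ≤ 1 / 12 + s - s ^ 2 := by nlinarith [mul_nonneg h0 (sub_nonneg.2 h1)]
  -- `1/108 - (s(1-s)(1-2s))² = 4 (s² - s + 1/6)² (1/12 + s - s²)`
  rw [hsq]
  nlinarith [mul_nonneg (sq_nonneg (s ^ 2 - s + 1 / 6)) hq]

noncomputable def logisticWeight (t : ℝ) : ℝ := sigmoid t * (1 - sigmoid t)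

lemma hasDerivAt_logisticWeight (x : ℝ) :
    HasDerivAt logisticWeight (logisticWeight x * (1 - 2 * sigmoid x)) x :=
  ((hasDerivAt_sigmoid x).mul ((hasDerivAt_sigmoid x).const_sub 1)).congr_deriv <| by
    rw [logisticWeight]; ring

lemma abs_logisticWeight_sub_le (s t : ℝ) :
    |logisticWeight s - logisticWeight t| ≤ 1 / (6 * √3) * |s - t| := by
  simpa only [Real.norm_eq_abs] using
    Convex.norm_image_sub_le_of_norm_hasDerivWithin_le
      (fun x _ => (hasDerivAt_logisticWeight x).hasDerivWithinAt)
      (fun x _ => abs_mul_one_sub_mul_one_sub_two_mul_le (sigmoid_nonneg x) (sigmoid_le_one x))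
      convex_univ (Set.mem_univ t) (Set.mem_univ s)

lemma toEuclideanCLM_vecMulVec {𝕜 ι : Type*} [RCLike 𝕜] [Fintype ι] [DecidableEq ι]
    (x y : ι → 𝕜) :
    toEuclideanCLM (𝕜 := 𝕜) (vecMulVec x (star y)) =
      InnerProductSpace.rankOne 𝕜 (WithLp.toLp 2 x) (WithLp.toLp 2 y) := by
  ext z : 1
  apply WithLp.ofLp_injective
  simp [InnerProductSpace.rankOne_def, EuclideanSpace.inner_eq_star_dotProduct, vecMulVec_mulVec,
    dotProduct_comm]

lemma norm_toEuclideanCLM_vecMulVec {𝕜 ι : Type*} [RCLike 𝕜] [Fintype ι] [DecidableEq ι]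
    (x y : ι → 𝕜) :
    ‖toEuclideanCLM (𝕜 := 𝕜) (vecMulVec x (star y))‖ =
      ‖WithLp.toLp 2 x‖ * ‖WithLp.toLp 2 y‖ := by
  rw [toEuclideanCLM_vecMulVec, InnerProductSpace.norm_rankOne]

lemma vnorm_eq_norm_toLp {d : ℕ} (v : Fin d → ℝ) : vnorm v = ‖WithLp.toLp 2 v‖ := by
  simp [vnorm, EuclideanSpace.norm_eq]

lemma abs_dotProduct_le_vnorm_mul_vnorm {d : ℕ} (u v : Fin d → ℝ) :
    |u ⬝ᵥ v| ≤ vnorm u * vnorm v := by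
  rw [vnorm_eq_norm_toLp, vnorm_eq_norm_toLp, dotProduct_comm]
  exact abs_real_inner_le_norm (WithLp.toLp 2 u) (WithLp.toLp 2 v)

lemma norm_vecMulVec_self {d : ℕ} (v : Fin d → ℝ) : ‖vecMulVec v v‖ = vnorm v ^ 2 := by
  simpa [← l2_opNorm_toEuclideanCLM, vnorm_eq_norm_toLp, sq] using
    norm_toEuclideanCLM_vecMulVec v v

lemma norm_logisticWeight_sub_smul_vecMulVec_le {d : ℕ} (a β β' : Fin d → ℝ) :
    ‖(logisticWeight (a ⬝ᵥ β) - logisticWeight (a ⬝ᵥ β')) • vecMulVec a a‖ ≤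
      vnorm a ^ 3 / (6 * √3) * vnorm (β - β') := by
  have hw := abs_logisticWeight_sub_le (a ⬝ᵥ β) (a ⬝ᵥ β')
  rw [← dotProduct_sub] at hw
  have hdot := abs_dotProduct_le_vnorm_mul_vnorm a (β - β')
  calc ‖(logisticWeight (a ⬝ᵥ β) - logisticWeight (a ⬝ᵥ β')) • vecMulVec a a‖
      ≤ 1 / (6 * √3) * (vnorm a * vnorm (β - β')) * vnorm a ^ 2 := by
        rw [norm_smul, Real.norm_eq_abs, norm_vecMulVec_self]
        gcongr
        exact hw.trans (by gcongr)
    _ = vnorm a ^ 3 / (6 * √3) * vnorm (β - β') := by ring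

lemma norm_one_div_card_smul_sum_le {E : Type*} [SeminormedAddCommGroup E] [NormedSpace ℝ E]
    {n : ℕ} (hn : 0 < n) {f : Fin n → E} {C : ℝ} (hf : ∀ i, ‖f i‖ ≤ C) :
    ‖(1 / (n : ℝ)) • ∑ i, f i‖ ≤ C := by
  have hn' : (0 : ℝ) < n := by exact_mod_cast hn
  calc ‖(1 / (n : ℝ)) • ∑ i, f i‖ ≤ 1 / n * (n * C) := by
        rw [norm_smul, Real.norm_of_nonneg (by positivity)]
        gcongr
        simpa using norm_sum_le_of_le Finset.univ fun i _ => hf i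
    _ = C := by field_simp

/-- Lemma 5.3, Lipschitz continuity of the logistic Hessian:
`‖H_β − H_{β'}‖ ≤ (max_i ‖A_i‖₂³/(6√3))·‖β − β'‖₂`. -/
theorem stmt12 {n d : ℕ} (hn : 1 ≤ n) (A : Fin n → Fin d → ℝ) :
    let σ : ℝ → ℝ := fun t => 1 / (1 + Real.exp (-t))
    let w : ℝ → ℝ := fun t => σ t * (1 - σ t)
    let H : (Fin d → ℝ) → Matrix (Fin d) (Fin d) ℝ := fun β =>
      (1 / (n : ℝ)) • ∑ i, w (A i ⬝ᵥ β) • Matrix.vecMulVec (A i) (A i)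
    ∀ β β' : Fin d → ℝ,
      matOpNorm (H β - H β') ≤
        ((Finset.univ.sup'
            (Finset.univ_nonempty_iff.mpr (Fin.pos_iff_nonempty.mp hn))
            fun i => vnorm (A i) ^ 3) / (6 * Real.sqrt 3)) * vnorm (β - β') := by
  intro σ w H β β'
  have hw : w = logisticWeight := by
    funext t
    simp [w, σ, logisticWeight, sigmoid_def]
  have hH : H β - H β' =
      (1 / (n : ℝ)) • ∑ i, (logisticWeight (A i ⬝ᵥ β) - logisticWeight (A i ⬝ᵥ β')) •
        vecMulVec (A i) (A i) := by
    simp only [H, hw, ← smul_sub, ← Finset.sum_sub_distrib, ← sub_smul]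
  rw [matOpNorm, l2_opNorm_toEuclideanCLM, hH]
  refine norm_one_div_card_smul_sum_le hn fun i => ?_
  refine (norm_logisticWeight_sub_smul_vecMulVec_le (A i) β β').trans ?_
  gcongr
  · rw [vnorm_eq_norm_toLp]; positivity
  · exact Finset.le_sup' (fun i => vnorm (A i) ^ 3) (Finset.mem_univ i)
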